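/- Let p be a homogeneous polynomial of degree k and q₀ its lowest-degree homogeneous part when p generates a principal ideal I = ⟨p⟩ (so q₀ is the lowest degree term of p). Then q₀* ∈ 𝕍̃₀(I) and q₀* ∉ 𝕍₀(I); in particular q₀*(D)p|₀ = ⟨q₀, q₀⟩₀ = ‖q₀‖₀² > 0. -/

import Mathlib

open MvPolynomial Complex Finset
open scoped ComplexOrder

/-- Iterated partial-derivative operator `∂^β` on polynomials. -/
noncomputable def Dpow {m : ℕ} (β : Fin m →₀ ℕ) :
    Module.End ℂ (MvPolynomial (Fin m) ℂ) :=
  (((List.finRange m).map fun j =>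
    ((MvPolynomial.pderiv j).toLinearMap : Module.End ℂ (MvPolynomial (Fin m) ℂ)) ^ (β j))).prod

/-- The constant-coefficient differential operator `q(D)` applied to `p`. -/
noncomputable def diffOp {m : ℕ} (q p : MvPolynomial (Fin m) ℂ) : MvPolynomial (Fin m) ℂ :=
  ∑ β ∈ q.support, q.coeff β • Dpow β p

/-- `q* `: conjugate the coefficients of `q`. -/
noncomputable def starPoly {m : ℕ} (q : MvPolynomial (Fin m) ℂ) : MvPolynomial (Fin m) ℂ :=
  MvPolynomial.map (starRingEnd ℂ) q

/-- The Fock pairing at `w`: `⟨p,q⟩_w = (q*(D)p)(w)`. -/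
noncomputable def fock {m : ℕ} (w : Fin m → ℂ) (p q : MvPolynomial (Fin m) ℂ) : ℂ :=
  MvPolynomial.eval w (diffOp (starPoly q) p)

/-- Multi-index factorial `α! = α₁!⋯α_m!`. -/
def mfac {m : ℕ} (α : Fin m →₀ ℕ) : ℕ := ∏ i : Fin m, (α i).factorial

/-- Total degree `|α|` of a multi-index. -/
def mdeg {m : ℕ} (α : Fin m →₀ ℕ) : ℕ := ∑ i : Fin m, α i

/-- Multi-index binomial coefficient. -/
def mbinom {m : ℕ} (α k : Fin m →₀ ℕ) : ℕ := ∏ i : Fin m, (α i).choose (k i)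

/-- The characteristic space `𝕍_w(I)`. -/
noncomputable def Vchar {m : ℕ} (w : Fin m → ℂ) (I : Set (MvPolynomial (Fin m) ℂ)) :
    Set (MvPolynomial (Fin m) ℂ) :=
  {q | ∀ p ∈ I, MvPolynomial.eval w (diffOp q p) = 0}

/-- The auxiliary space `𝕍̃_w(I)`. -/
noncomputable def Vtilde {m : ℕ} (w : Fin m → ℂ) (I : Set (MvPolynomial (Fin m) ℂ)) :
    Set (MvPolynomial (Fin m) ℂ) :=
  {q | ∀ j : Fin m, MvPolynomial.pderiv j q ∈ Vchar w I}

/-!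
At the origin the pairing is diagonal in the monomial basis: `q(D) r |₀ = ∑ β! q_β r_β`.
Hence `q₀*(D) p |₀` only sees the degree-`d` part of `p`, which is `q₀`, and equals
`∑ β! |q₀_β|² > 0`; whereas each `∂ⱼ q₀*` only has monomials of degree `d - 1`, and no
multiple of `p` has a monomial of degree below `d`.
-/

section Derivatives

variable {m : ℕ}

lemma coeff_pderiv_pow (j : Fin m) (n : ℕ) (r : MvPolynomial (Fin m) ℂ) (γ : Fin m →₀ ℕ) :
    coeff γ ((((pderiv j).toLinearMap : Module.End ℂ (MvPolynomial (Fin m) ℂ)) ^ n) r)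
      = coeff (γ + Finsupp.single j n) r * ((γ j + n).descFactorial n : ℂ) := by
  induction n generalizing r with
  | zero => simp
  | succ n ih =>
    rw [pow_succ, Module.End.mul_apply, ih, Derivation.coeFn_coe, coeff_pderiv, add_assoc,
      ← Finsupp.single_add, Finsupp.add_apply, Finsupp.single_eq_same,
      ← add_assoc (γ j), Nat.succ_descFactorial_succ]
    push_cast
    ring

lemma coeff_list_prod_pderiv_pow (β : Fin m →₀ ℕ) (r : MvPolynomial (Fin m) ℂ) :
    ∀ (l : List (Fin m)), l.Nodup → ∀ γ : Fin m →₀ ℕ,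
      coeff γ ((l.map fun j =>
          ((pderiv j).toLinearMap : Module.End ℂ (MvPolynomial (Fin m) ℂ)) ^ β j).prod r)
        = coeff (γ + ∑ j ∈ l.toFinset, Finsupp.single j (β j)) r
            * ∏ j ∈ l.toFinset, ((γ j + β j).descFactorial (β j) : ℂ)
  | [], _, γ => by simp
  | j :: t, hnd, γ => by
    obtain ⟨hj, ht⟩ := List.nodup_cons.mp hnd
    have hjt : j ∉ t.toFinset := List.mem_toFinset.not.mpr hj
    have hγ : ∀ i ∈ t.toFinset, (γ + Finsupp.single j (β j)) i = γ i := fun i hi => by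
      rw [Finsupp.add_apply, Finsupp.single_eq_of_ne (ne_of_mem_of_not_mem hi hjt), add_zero]
    rw [List.map_cons, List.prod_cons, Module.End.mul_apply, coeff_pderiv_pow,
      coeff_list_prod_pderiv_pow β r t ht, List.toFinset_cons, sum_insert hjt, prod_insert hjt,
      prod_congr rfl fun i hi => by rw [hγ i hi], add_assoc]
    ring

lemma coeff_zero_Dpow (β : Fin m →₀ ℕ) (r : MvPolynomial (Fin m) ℂ) :
    coeff 0 (Dpow β r) = (mfac β : ℂ) * r.coeff β := by
  rw [Dpow, coeff_list_prod_pderiv_pow β r _ (List.nodup_finRange m), List.toFinset_finRange,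
    Finsupp.univ_sum_single, zero_add, mfac, mul_comm]
  simp [Nat.descFactorial_self]

lemma eval_zero_diffOp (q r : MvPolynomial (Fin m) ℂ) :
    eval 0 (diffOp q r) = ∑ β ∈ q.support, q.coeff β * mfac β * r.coeff β := by
  simp only [eval_zero, constantCoeff_eq, diffOp, coeff_sum, coeff_smul, coeff_zero_Dpow,
    smul_eq_mul, mul_assoc]

lemma eval_zero_diffOp_congr {q r r' : MvPolynomial (Fin m) ℂ}
    (h : ∀ β ∈ q.support, r.coeff β = r'.coeff β) :
    eval 0 (diffOp q r) = eval 0 (diffOp q r') := by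
  simp only [eval_zero_diffOp]
  exact sum_congr rfl fun β hβ => by rw [h β hβ]

lemma eval_zero_diffOp_eq_zero {q r : MvPolynomial (Fin m) ℂ}
    (h : ∀ β ∈ q.support, r.coeff β = 0) : eval 0 (diffOp q r) = 0 := by
  rw [eval_zero_diffOp]
  exact sum_eq_zero fun β hβ => by rw [h β hβ, mul_zero]

lemma support_starPoly (q : MvPolynomial (Fin m) ℂ) : (starPoly q).support = q.support :=
  support_map_of_injective q (starRingEnd ℂ).injective

lemma fock_zero_self (q : MvPolynomial (Fin m) ℂ) :
    fock 0 q q = ((∑ β ∈ q.support, mfac β * normSq (q.coeff β) : ℝ) : ℂ) := by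
  rw [fock, eval_zero_diffOp, support_starPoly, ofReal_sum]
  refine sum_congr rfl fun β _ => ?_
  rw [starPoly, coeff_map, ofReal_mul, normSq_eq_conj_mul_self]
  push_cast
  ring

lemma fock_zero_self_pos {q : MvPolynomial (Fin m) ℂ} (hq : q ≠ 0) : 0 < fock 0 q q := by
  rw [fock_zero_self, zero_lt_real]
  obtain ⟨β, hβ⟩ := ne_zero_iff.mp hq
  have hmfac : ∀ α : Fin m →₀ ℕ, (0 : ℝ) < mfac α := fun α => by
    exact_mod_cast prod_pos fun i _ => Nat.factorial_pos (α i)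
  refine sum_pos' (fun α _ => mul_nonneg (hmfac α).le (normSq_nonneg _))
    ⟨β, mem_support_iff.mpr hβ, mul_pos (hmfac β) (normSq_pos.mpr hβ)⟩

lemma mdeg_eq_degree (α : Fin m →₀ ℕ) : mdeg α = α.degree :=
  (Finsupp.degree_eq_sum α).symm

end Derivatives

section Support

variable {σ R : Type*}

lemma add_single_mem_support_of_mem_support_pderiv [CommSemiring R] {q : MvPolynomial σ R}
    {j : σ} {β : σ →₀ ℕ} (hβ : β ∈ (pderiv j q).support) :
    β + Finsupp.single j 1 ∈ q.support := by
  rw [mem_support_iff, coeff_pderiv] at hβ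
  exact mem_support_iff.mpr (left_ne_zero_of_mul hβ)

lemma MvPolynomial.IsHomogeneous.degree_of_mem_support [CommSemiring R] {q : MvPolynomial σ R} {d : ℕ}
    (hq : q.IsHomogeneous d) {β : σ →₀ ℕ} (hβ : β ∈ q.support) : β.degree = d :=
  (hq.degree_eq_sum_deg_support hβ).symm

lemma le_degree_of_mem_support_mul [CommSemiring R] {p : MvPolynomial σ R} {d : ℕ}
    (hp : ∀ α ∈ p.support, d ≤ α.degree) (g : MvPolynomial σ R) {β : σ →₀ ℕ}
    (hβ : β ∈ (p * g).support) : d ≤ β.degree := by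
  classical
  obtain ⟨a, ha, b, -, rfl⟩ := mem_add.mp (support_mul p g hβ)
  rw [map_add]
  exact (hp a ha).trans le_self_add

variable [CommRing R] {p q₀ : MvPolynomial σ R} {d : ℕ}

lemma coeff_eq_of_degree_le (hlow : ∀ α ∈ (p - q₀).support, d < α.degree) {β : σ →₀ ℕ}
    (hβ : β.degree ≤ d) : p.coeff β = q₀.coeff β := by
  by_contra hne
  have := hlow β (mem_support_iff.mpr (by rwa [coeff_sub, sub_ne_zero]))
  omega

lemma le_degree_of_mem_support (hq₀ : q₀.IsHomogeneous d)
    (hlow : ∀ α ∈ (p - q₀).support, d < α.degree) {α : σ →₀ ℕ} (hα : α ∈ p.support) :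
    d ≤ α.degree := by
  by_contra! hlt
  rw [mem_support_iff, coeff_eq_of_degree_le hlow hlt.le] at hα
  exact hα (hq₀.coeff_eq_zero hlt.ne)

end Support

/-- if `q₀` is the lowest-degree homogeneous part of `p` and
`I = ⟨p⟩`, then `q₀* ∈ 𝕍̃₀(I)`, `q₀* ∉ 𝕍₀(I)`, and
`q₀*(D)p|₀ = ⟨q₀,q₀⟩₀ = ‖q₀‖₀² > 0`. -/
theorem lowest_degree_part_in_Vtilde {m d : ℕ} (p q₀ : MvPolynomial (Fin m) ℂ)
    (hhom : q₀.IsHomogeneous d) (hq₀ : q₀ ≠ 0)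
    (hlow : ∀ α ∈ (p - q₀).support, d < mdeg α) :
    starPoly q₀ ∈ Vtilde (0 : Fin m → ℂ)
        ((Ideal.span {p} : Ideal (MvPolynomial (Fin m) ℂ)) : Set (MvPolynomial (Fin m) ℂ)) ∧
    starPoly q₀ ∉ Vchar (0 : Fin m → ℂ)
        ((Ideal.span {p} : Ideal (MvPolynomial (Fin m) ℂ)) : Set (MvPolynomial (Fin m) ℂ)) ∧
    MvPolynomial.eval (0 : Fin m → ℂ) (diffOp (starPoly q₀) p) = fock 0 q₀ q₀ ∧
    0 < fock 0 q₀ q₀ := by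
  simp only [mdeg_eq_degree] at hlow
  have hdeg : ∀ β ∈ (starPoly q₀).support, β.degree = d := fun β hβ =>
    hhom.degree_of_mem_support (support_starPoly q₀ ▸ hβ)
  have hpair : eval 0 (diffOp (starPoly q₀) p) = fock 0 q₀ q₀ :=
    eval_zero_diffOp_congr fun β hβ => coeff_eq_of_degree_le hlow (hdeg β hβ).le
  have hpos := fock_zero_self_pos hq₀
  refine ⟨fun j r hr => ?_, fun h => hpos.ne' (hpair ▸ h p (Ideal.mem_span_singleton_self p)),
    hpair, hpos⟩
  obtain ⟨g, rfl⟩ := Ideal.mem_span_singleton'.mp hr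
  refine eval_zero_diffOp_eq_zero fun β hβ => notMem_support_iff.mp fun hβ' => ?_
  have hlt := hdeg _ (add_single_mem_support_of_mem_support_pderiv hβ)
  have hge := le_degree_of_mem_support_mul (fun α => le_degree_of_mem_support hhom hlow) g
    (mul_comm g p ▸ hβ')
  rw [map_add, Finsupp.degree_single] at hlt
  omega
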